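/- Let B ⊆ ℝ² be a closed set and let W = ℝ² \ B (so W is open). Then for any three points p, q, r ∈ ℝ² there exist a rotation R ∈ SO(2) and a vector v ∈ ℝ² such that the three points R·p + v, R·q + v, R·r + v are all in B or all in W. -/

import Mathlib

/-!
Suppose no rotated and translated copy of `p, q, r` is monochromatic. Then `B` is neither empty
nor the whole plane, so it has a frontier point `x`. Put one vertex at `x` and rotate the triangle
about it. The other two vertices never both lie in `B`, since `x` does; and at least one of them
does, because this holds for every apex in `Bᶜ` and passes to the limit `x` as `B` is closed. So
at each angle exactly one of the two vertices lies in `B`, and since the angle ranges over the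
connected line, one of the two circles they sweep out lies in `B` and the other in `Bᶜ`.
Doing this at each vertex, the circles about `x` of radii `|pq|`, `|pr|`, `|qr|` are pairwise of
opposite colours, which is impossible with two colours.
-/

open Real Set

noncomputable section

def rotationMatrix (θ : ℝ) : Matrix (Fin 2) (Fin 2) ℝ :=
  !![cos θ, -sin θ; sin θ, cos θ]

lemma rotationMatrix_mem_specialOrthogonalGroup (θ : ℝ) :
    rotationMatrix θ ∈ Matrix.specialOrthogonalGroup (Fin 2) ℝ := by
  rw [Matrix.mem_specialOrthogonalGroup_iff, Matrix.mem_orthogonalGroup_iff]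
  refine ⟨?_, ?_⟩
  · ext i j
    fin_cases i <;> fin_cases j <;>
      simp [rotationMatrix, Matrix.mul_apply, Fin.sum_univ_two] <;> ring_nf <;> simp
  · simp [rotationMatrix, Matrix.det_fin_two, ← sq]

lemma continuous_rotationMatrix : Continuous rotationMatrix :=
  continuous_matrix fun i j => by
    fin_cases i <;> fin_cases j <;> simp only [rotationMatrix] <;> simp <;> fun_prop

def planeRotation (θ : ℝ) : EuclideanSpace ℝ (Fin 2) →ₗ[ℝ] EuclideanSpace ℝ (Fin 2) :=
  (rotationMatrix θ).toEuclideanLin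

namespace planeRotation

lemma zero_apply (u : EuclideanSpace ℝ (Fin 2)) : planeRotation 0 u = u := by
  ext i
  fin_cases i <;> simp [planeRotation, rotationMatrix, Matrix.mulVec, dotProduct]

lemma add_pi_apply (θ : ℝ) (u : EuclideanSpace ℝ (Fin 2)) :
    planeRotation (θ + π) u = planeRotation θ (-u) := by
  ext i
  fin_cases i <;> simp [planeRotation, rotationMatrix, Matrix.mulVec, dotProduct] <;> ring

@[fun_prop]
lemma continuous_apply (u : EuclideanSpace ℝ (Fin 2)) :
    Continuous fun θ => planeRotation θ u :=
  (PiLp.continuous_toLp 2 _).comp (continuous_rotationMatrix.matrix_mulVec continuous_const)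

lemma forall_add_neg_mem_iff (B : Set (EuclideanSpace ℝ (Fin 2)))
    (x u : EuclideanSpace ℝ (Fin 2)) :
    (∀ θ, x + planeRotation θ (-u) ∈ B) ↔ ∀ θ, x + planeRotation θ u ∈ B := by
  simp only [← add_pi_apply]
  exact (Equiv.addRight π).forall_congr_right (q := fun θ => x + planeRotation θ u ∈ B)

lemma add_sub_apply (θ : ℝ) (a b y : EuclideanSpace ℝ (Fin 2)) :
    planeRotation θ b + (y - planeRotation θ a) = y + planeRotation θ (b - a) := by
  rw [map_sub]
  abel

end planeRotation

def Monochromatic {α : Type*} (B : Set α) (a b c : α) : Prop :=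
  (a ∈ B ∧ b ∈ B ∧ c ∈ B) ∨ (a ∉ B ∧ b ∉ B ∧ c ∉ B)

section Monochromatic

variable {α : Type*} {B : Set α} {a b c : α}

lemma monochromatic_swap : Monochromatic B a b c ↔ Monochromatic B b a c := by
  unfold Monochromatic
  tauto

lemma monochromatic_rotate : Monochromatic B a b c ↔ Monochromatic B b c a := by
  unfold Monochromatic
  tauto

lemma nonempty_and_ne_univ_of_not_monochromatic (h : ¬ Monochromatic B a b c) :
    B.Nonempty ∧ B ≠ univ := by
  refine ⟨?_, fun hB => h (.inl (by simp [hB]))⟩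
  by_contra hB
  exact h (.inr (by simp [not_nonempty_iff_eq_empty.1 hB]))

end Monochromatic

lemma mem_or_mem_of_mem_closure {X Y : Type*} [TopologicalSpace X] [TopologicalSpace Y]
    {B : Set Y} (hB : IsClosed B) {f g : X → Y} (hf : Continuous f) (hg : Continuous g)
    {s : Set X} (h : ∀ y ∈ s, f y ∈ B ∨ g y ∈ B) {x : X} (hx : x ∈ closure s) :
    f x ∈ B ∨ g x ∈ B :=
  closure_minimal h ((hB.preimage hf).union (hB.preimage hg)) hx

lemma forall_iff_not_forall_of_isClosed {T : Type*} [TopologicalSpace T] [PreconnectedSpace T]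
    [Nonempty T] {P Q : T → Prop} (hP : IsClosed {t | P t}) (hQ : IsClosed {t | Q t})
    (hPQ : ∀ t, P t ↔ ¬ Q t) : (∀ t, P t) ↔ ¬ ∀ t, Q t := by
  have hPQ' : {t | P t} = {t | Q t}ᶜ := ext hPQ
  rcases isClopen_iff.1 ⟨hP, hPQ' ▸ hQ.isOpen_compl⟩ with h | h
  · have hP' : ∀ t, ¬ P t := eq_empty_iff_forall_notMem.1 h
    simp only [hPQ, not_not] at hP' ⊢
    simp [hP']
  · have hP' : ∀ t, P t := eq_univ_iff_forall.1 h
    simp only [hPQ] at hP' ⊢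
    simp [hP']

section Circles

variable {B : Set (EuclideanSpace ℝ (Fin 2))}

lemma forall_add_planeRotation_mem_iff_not (hB : IsClosed B) {x : EuclideanSpace ℝ (Fin 2)}
    (hx : x ∈ frontier B) {u w : EuclideanSpace ℝ (Fin 2)}
    (hno : ∀ θ y, ¬ Monochromatic B y (y + planeRotation θ u) (y + planeRotation θ w)) :
    (∀ θ, x + planeRotation θ u ∈ B) ↔ ¬ ∀ θ, x + planeRotation θ w ∈ B := by
  have hxB : x ∈ B := hB.frontier_subset hx
  have hxW : x ∈ closure Bᶜ := frontier_subset_closure (by rwa [frontier_compl])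
  refine forall_iff_not_forall_of_isClosed (hB.preimage (by fun_prop))
    (hB.preimage (by fun_prop)) fun θ => ?_
  have hnot_both : ¬ (x + planeRotation θ u ∈ B ∧ x + planeRotation θ w ∈ B) :=
    fun h => hno θ x (.inl ⟨hxB, h⟩)
  have hW : ∀ y ∈ Bᶜ, y + planeRotation θ u ∈ B ∨ y + planeRotation θ w ∈ B := by
    intro y hy
    by_contra! h
    exact hno θ y (.inr ⟨hy, h⟩)
  have hone : x + planeRotation θ u ∈ B ∨ x + planeRotation θ w ∈ B :=
    mem_or_mem_of_mem_closure hB (f := (· + planeRotation θ u)) (g := (· + planeRotation θ w))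
      (by fun_prop) (by fun_prop) hW hxW
  tauto

lemma not_monochromatic_add_planeRotation_sub {a b c : EuclideanSpace ℝ (Fin 2)}
    (h : ∀ θ v, ¬ Monochromatic B (planeRotation θ a + v) (planeRotation θ b + v)
      (planeRotation θ c + v))
    (θ : ℝ) (y : EuclideanSpace ℝ (Fin 2)) :
    ¬ Monochromatic B y (y + planeRotation θ (b - a)) (y + planeRotation θ (c - a)) := by
  simpa only [planeRotation.add_sub_apply, add_sub_cancel] using h θ (y - planeRotation θ a)

end Circles

theorem stmt5 (B : Set (EuclideanSpace ℝ (Fin 2))) (hB : IsClosed B)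
    (p q r : EuclideanSpace ℝ (Fin 2)) :
    ∃ R : Matrix (Fin 2) (Fin 2) ℝ, R ∈ Matrix.specialOrthogonalGroup (Fin 2) ℝ ∧
      ∃ v : EuclideanSpace ℝ (Fin 2),
        ∀ f : EuclideanSpace ℝ (Fin 2) → EuclideanSpace ℝ (Fin 2),
          (f = fun x => (WithLp.equiv 2 (Fin 2 → ℝ)).symm
              (R.mulVec (WithLp.equiv 2 (Fin 2 → ℝ) x)) + v) →
          ((f p ∈ B ∧ f q ∈ B ∧ f r ∈ B) ∨ (f p ∉ B ∧ f q ∉ B ∧ f r ∉ B)) := by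
  by_contra h
  have hno : ∀ θ v, ¬ Monochromatic B (planeRotation θ p + v) (planeRotation θ q + v)
      (planeRotation θ r + v) :=
    fun θ v hm => h ⟨rotationMatrix θ, rotationMatrix_mem_specialOrthogonalGroup θ, v,
      fun f hf => hf ▸ hm⟩
  have hpqr := hno 0 0
  simp only [planeRotation.zero_apply, add_zero] at hpqr
  obtain ⟨x, hx⟩ := nonempty_frontier_iff.2 (nonempty_and_ne_univ_of_not_monochromatic hpqr)
  have hp := forall_add_planeRotation_mem_iff_not hB hx
    (not_monochromatic_add_planeRotation_sub hno)
  have hq := forall_add_planeRotation_mem_iff_not hB hx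
    (not_monochromatic_add_planeRotation_sub fun θ v hm => hno θ v (monochromatic_swap.1 hm))
  have hr := forall_add_planeRotation_mem_iff_not hB hx
    (not_monochromatic_add_planeRotation_sub fun θ v hm => hno θ v (monochromatic_rotate.1 hm))
  rw [← neg_sub q p, planeRotation.forall_add_neg_mem_iff] at hq
  rw [← neg_sub r p, ← neg_sub r q, planeRotation.forall_add_neg_mem_iff,
    planeRotation.forall_add_neg_mem_iff] at hr
  tauto
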